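/- arXiv:math/0306202 — 4 statements merged into one kernel-verified Lean document; each statement's English description precedes it below -/
import Mathlib

section
/- The space S^n(ℝ^{m*}) ⊗ ℝ^m ⊗ ℝ^{m*} ⊗ ℝ^{m*} decomposes as the direct sum of C_n := ker(γ_n) and the image of the linear map g ↦ ∑_{i,j} (∂²g/∂z^i∂z^j) ⊗ u^i ⊗ v^j from S^{n+2}(ℝ^{m*}) ⊗ ℝ^m. -/
open MvPolynomial

/-!
Euler's identity `∑ i, X i * ∂ᵢ f = (deg f) • f`, applied twice, shows that `γ ∘ Hess` is
multiplication by `(n + 1) * (n + 2)` on homogeneous polynomials of degree `n + 2`. Since this is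
invertible over `ℝ`, `T = (T - Hess g) + Hess g` with `g = ((n + 1) * (n + 2))⁻¹ • γ T` is a
decomposition, and applying `γ` to any decomposition `T = c + Hess g` with `γ c = 0` recovers this
`g`.
-/

namespace MvPolynomial

section

variable {R σ : Type*} [CommSemiring R] [Fintype σ]

/-- The map `γ` of the paper, on one `ℝ^m`-component. -/
noncomputable def gamma : (σ → σ → MvPolynomial σ R) →ₗ[R] MvPolynomial σ R where
  toFun c := ∑ i, ∑ j, c i j * X i * X j
  map_add' c d := by simp only [Pi.add_apply, add_mul, Finset.sum_add_distrib]
  map_smul' a c := by simp only [Pi.smul_apply, smul_mul_assoc, Finset.smul_sum, RingHom.id_apply]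

noncomputable def hessian : MvPolynomial σ R →ₗ[R] (σ → σ → MvPolynomial σ R) :=
  LinearMap.pi fun i => LinearMap.pi fun j => (pderiv i).toLinearMap ∘ₗ (pderiv j).toLinearMap

omit [Fintype σ] in
theorem hessian_apply (g : MvPolynomial σ R) (i j : σ) :
    hessian g i j = pderiv i (pderiv j g) :=
  rfl

theorem IsHomogeneous.gamma {n : ℕ} {c : σ → σ → MvPolynomial σ R}
    (hc : ∀ i j, (c i j).IsHomogeneous n) : (gamma c).IsHomogeneous (n + 2) :=
  IsHomogeneous.sum _ _ _ fun i _ => IsHomogeneous.sum _ _ _ fun j _ =>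
    ((hc i j).mul (isHomogeneous_X R i)).mul (isHomogeneous_X R j)

omit [Fintype σ] in
theorem IsHomogeneous.hessian {n : ℕ} {g : MvPolynomial σ R} (hg : g.IsHomogeneous (n + 2))
    (i j : σ) : (hessian g i j).IsHomogeneous n :=
  hg.pderiv.pderiv

theorem gamma_hessian {n : ℕ} {g : MvPolynomial σ R} (hg : g.IsHomogeneous n) :
    gamma (hessian g) = ((n - 1) * n) • g := by
  have euler_pderiv (j : σ) : ∑ i, X i * pderiv i (pderiv j g) = (n - 1) • pderiv j g :=
    hg.pderiv.sum_X_mul_pderiv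
  calc gamma (hessian g) = ∑ j, (∑ i, X i * pderiv i (pderiv j g)) * X j := by
        simp only [gamma, hessian_apply, LinearMap.coe_mk, AddHom.coe_mk, Finset.sum_mul]
        rw [Finset.sum_comm]
        simp only [mul_comm (X _)]
    _ = (n - 1) • ∑ j, X j * pderiv j g := by
        rw [Finset.smul_sum]
        exact Finset.sum_congr rfl fun j _ => by rw [euler_pderiv, smul_mul_assoc, mul_comm]
    _ = ((n - 1) * n) • g := by rw [hg.sum_X_mul_pderiv, mul_smul]

end

section

variable {K σ : Type*} [Field K] [Fintype σ]

theorem gamma_hessian_eq_smul {n : ℕ} {g : MvPolynomial σ K} (hg : g.IsHomogeneous (n + 2)) :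
    gamma (hessian g) = (((n + 1) * (n + 2) : ℕ) : K) • g := by
  rw [gamma_hessian hg, Nat.cast_smul_eq_nsmul]
  rfl

/-- The `g` of the `Im(Hess)`-component `Hess g` of a tensor `T` of degree `n`. -/
noncomputable def hessianPotential (n : ℕ) (T : σ → σ → MvPolynomial σ K) :
    MvPolynomial σ K :=
  (((n + 1) * (n + 2) : ℕ) : K)⁻¹ • gamma T

theorem IsHomogeneous.hessianPotential {n : ℕ} {T : σ → σ → MvPolynomial σ K}
    (hT : ∀ i j, (T i j).IsHomogeneous n) : (hessianPotential n T).IsHomogeneous (n + 2) :=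
  (homogeneousSubmodule σ K (n + 2)).smul_mem _ (.gamma hT)

theorem gamma_sub_hessian_hessianPotential [CharZero K] {n : ℕ}
    {T : σ → σ → MvPolynomial σ K} (hT : ∀ i j, (T i j).IsHomogeneous n) :
    gamma (T - hessian (hessianPotential n T)) = 0 := by
  have hr : (((n + 1) * (n + 2) : ℕ) : K) ≠ 0 := Nat.cast_ne_zero.mpr (by positivity)
  rw [map_sub, gamma_hessian_eq_smul (IsHomogeneous.hessianPotential hT), hessianPotential,
    smul_inv_smul₀ hr, sub_self]

theorem eq_hessianPotential_of_eq_add_hessian [CharZero K] {n : ℕ}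
    {T c : σ → σ → MvPolynomial σ K} {g : MvPolynomial σ K} (hc : gamma c = 0)
    (hg : g.IsHomogeneous (n + 2)) (hT : T = c + hessian g) : g = hessianPotential n T := by
  have hr : (((n + 1) * (n + 2) : ℕ) : K) ≠ 0 := Nat.cast_ne_zero.mpr (by positivity)
  rw [hessianPotential, hT, map_add, hc, zero_add, gamma_hessian_eq_smul hg, inv_smul_smul₀ hr]

end

end MvPolynomial

/-- `Sⁿ(ℝ^{m*}) ⊗ ℝ^m ⊗ ℝ^{m*} ⊗ ℝ^{m*} = Cₙ ⊕ Im(Hess)`, where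
`Cₙ = ker γₙ` (with `γₙ(T) l = ∑_{i,j} T l i j · z^i z^j`) and `Hess` sends
`g ∈ S^{n+2}(ℝ^{m*}) ⊗ ℝ^m` to `∑_{i,j} (∂²g/∂z^i∂z^j) ⊗ u^i ⊗ v^j`.  The direct-sum
decomposition is expressed as unique decomposability of every element `T`. -/
theorem directSum_ker_gamma_im_hessian (m n : ℕ) :
    ∀ T : Fin m → Fin m → Fin m → MvPolynomial (Fin m) ℝ,
      (∀ l i j, (T l i j).IsHomogeneous n) →
      ∃! cg : (Fin m → Fin m → Fin m → MvPolynomial (Fin m) ℝ) ×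
              (Fin m → MvPolynomial (Fin m) ℝ),
        (∀ l i j, (cg.1 l i j).IsHomogeneous n) ∧
        (∀ l, (cg.2 l).IsHomogeneous (n + 2)) ∧
        (∀ l, ∑ i, ∑ j, cg.1 l i j * X i * X j = 0) ∧
        (∀ l i j, T l i j = cg.1 l i j + pderiv i (pderiv j (cg.2 l))) := by
  intro T hT
  refine ⟨(fun l => T l - hessian (hessianPotential n (T l)), fun l => hessianPotential n (T l)),
    ⟨fun l i j => (hT l i j).sub ((IsHomogeneous.hessianPotential (hT l)).hessian i j),
      fun l => IsHomogeneous.hessianPotential (hT l),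
      fun l => gamma_sub_hessian_hessianPotential (hT l),
      fun l i j => (sub_add_cancel _ _).symm⟩, ?_⟩
  rintro ⟨c, g⟩ ⟨-, hg, hc, hTcg⟩
  have hTl (l : Fin m) : T l = c l + hessian (g l) := funext₂ (hTcg l)
  have hg_eq (l : Fin m) : g l = hessianPotential n (T l) :=
    eq_hessianPotential_of_eq_add_hessian (hc l) (hg l) (hTl l)
  refine Prod.ext (funext fun l => ?_) (funext hg_eq)
  dsimp only
  rw [← hg_eq l, hTl l, add_sub_cancel_right]
end

section
/- For n ≥ 2, let L_n = ker(δ_n) ⊂ S^n(ℝ^{m*}) ⊗ S^2(ℝ^{m*}), where δ_n(f ⊗ q) = ∑_i f·z^i ⊗ ∂q/∂u^i. Then for every h_n ∈ S^n(ℝ^{m*}) ⊗ S^2(ℝ^{m*}) there exists a unique g ∈ S^{n+1}(ℝ^{m*}) ⊗ ℝ^m such that −2 ∑_{i,j} (∂g_i/∂z^j)(z) ⊗ u^i u^j + h_n lies in L_n (writing g = ∑_i g_i(z) e_i). -/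
open MvPolynomial

/-!
Write `⟨z, g⟩ = ∑ zⁱ gᵢ` and `Hⱼ = ∑ zⁱ hᵢⱼ`. The `uʲ`-component of `δₙ` applied to
`−2 ∑ ∂gᵢ/∂zʲ ⊗ uⁱuʲ + hₙ` is `2 (Hⱼ − ∑ᵢ (∂ⱼgᵢ + ∂ᵢgⱼ) zⁱ)`, and for `g` homogeneous of degree
`n + 1` Euler's identity rewrites `∑ᵢ (∂ⱼgᵢ + ∂ᵢgⱼ) zⁱ` as `∂ⱼ⟨z, g⟩ + n gⱼ`. So the condition is
the linear system `∂ⱼ⟨z, g⟩ + n gⱼ = Hⱼ`. Contracting it with `z` and applying Euler's identity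
to `⟨z, g⟩` gives `(2n + 2) ⟨z, g⟩ = ⟨z, H⟩`, which determines `⟨z, g⟩` and then `g`; conversely
`gⱼ = (Hⱼ − ∂ⱼ⟨z, H⟩ / (2n + 2)) / n` is a solution.
-/

namespace MvPolynomial

variable {σ R : Type*} [Fintype σ]

section CommSemiring

variable [CommSemiring R]

theorem pderiv_sum_X_mul (p : σ → MvPolynomial σ R) (j : σ) :
    pderiv j (∑ i, X i * p i) = p j + ∑ i, X i * pderiv j (p i) := by
  simp only [map_sum, pderiv_mul, Finset.sum_add_distrib]
  congr 1
  rw [Finset.sum_eq_single j (fun i _ hij => by rw [pderiv_X_of_ne hij, zero_mul]) (by simp),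
    pderiv_X_self, one_mul]

theorem isHomogeneous_sum_X_mul {n : ℕ} {p : σ → MvPolynomial σ R}
    (hp : ∀ i, (p i).IsHomogeneous n) : (∑ i, X i * p i).IsHomogeneous (n + 1) :=
  IsHomogeneous.sum _ _ _ fun i _ => by
    simpa only [add_comm 1 n] using (isHomogeneous_X R i).mul (hp i)

/-- `-2 • symmPDerivContract g j` is the `uʲ`-component of `δₙ (−2 ∑ ∂gᵢ/∂zʲ ⊗ uⁱuʲ)`. -/
noncomputable def symmPDerivContract (g : σ → MvPolynomial σ R) (j : σ) : MvPolynomial σ R :=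
  ∑ i, (pderiv j (g i) + pderiv i (g j)) * X i

theorem symmPDerivContract_eq_pderiv_add_nsmul {n : ℕ} {g : σ → MvPolynomial σ R}
    (hg : ∀ i, (g i).IsHomogeneous (n + 1)) (j : σ) :
    symmPDerivContract g j = pderiv j (∑ i, X i * g i) + n • g j := by
  have hEuler : ∑ i, pderiv i (g j) * X i = (n + 1) • g j := by
    simp only [mul_comm _ (X _), (hg j).sum_X_mul_pderiv]
  rw [symmPDerivContract, pderiv_sum_X_mul]
  simp only [add_mul, Finset.sum_add_distrib, hEuler, succ_nsmul, mul_comm (pderiv j _)]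
  abel

end CommSemiring

section CommRing

variable [CommRing R]

theorem symmPDerivContract_sub (g g' : σ → MvPolynomial σ R) :
    symmPDerivContract (g - g') = symmPDerivContract g - symmPDerivContract g' := by
  ext1 j
  simp only [symmPDerivContract, Pi.sub_apply, map_sub, ← Finset.sum_sub_distrib]
  exact Finset.sum_congr rfl fun i _ => by ring

variable [IsDomain R] [CharZero R]

theorem eq_zero_of_symmPDerivContract_eq_zero {n : ℕ} (hn : n ≠ 0) {d : σ → MvPolynomial σ R}
    (hd : ∀ i, (d i).IsHomogeneous (n + 1)) (h : symmPDerivContract d = 0) : d = 0 := by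
  set D := ∑ i, X i * d i
  have hD : ∀ j, pderiv j D + n • d j = 0 := fun j => by
    rw [← symmPDerivContract_eq_pderiv_add_nsmul hd, h, Pi.zero_apply]
  have hD0 : D = 0 := by
    have h2n : (2 * n + 2) • D = 0 := by
      calc (2 * n + 2) • D = ∑ j, X j * pderiv j D + ∑ j, X j * (n • d j) := by
            simp only [(isHomogeneous_sum_X_mul hd).sum_X_mul_pderiv, mul_smul_comm,
              ← Finset.smul_sum, D, ← add_nsmul]
            ring_nf
        _ = 0 := by
            simp only [← Finset.sum_add_distrib, ← mul_add, hD, mul_zero, Finset.sum_const_zero]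
    exact (smul_eq_zero.mp h2n).resolve_left (by omega)
  ext1 j
  simpa [hD0, hn] using hD j

theorem symmPDerivContract_injOn {n : ℕ} (hn : n ≠ 0) :
    Set.InjOn (symmPDerivContract (R := R))
      {g : σ → MvPolynomial σ R | ∀ i, (g i).IsHomogeneous (n + 1)} :=
  fun g hg g' hg' h => sub_eq_zero.mp <| eq_zero_of_symmPDerivContract_eq_zero hn
    (fun i => (hg i).sub (hg' i)) (by rw [symmPDerivContract_sub, h, sub_self])

theorem sum_mul_X_eq_zero_iff_symmPDerivContract_eq {g : σ → MvPolynomial σ R}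
    {h : σ → σ → MvPolynomial σ R} (hsymm : ∀ i j, h i j = h j i) (j : σ) :
    ∑ i, (((-(pderiv j (g i) + pderiv i (g j)) + h i j)
      + (-(pderiv i (g j) + pderiv j (g i)) + h j i)) * X i) = 0 ↔
    symmPDerivContract g j = ∑ i, X i * h i j := by
  have hsummand : ∀ i, ((-(pderiv j (g i) + pderiv i (g j)) + h i j)
      + (-(pderiv i (g j) + pderiv j (g i)) + h j i)) * X i
      = 2 * (X i * h i j - (pderiv j (g i) + pderiv i (g j)) * X i) := fun i => by
    rw [hsymm j i]; ring
  rw [Finset.sum_congr rfl fun i _ => hsummand i, ← Finset.mul_sum, Finset.sum_sub_distrib,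
    mul_eq_zero, or_iff_right two_ne_zero, sub_eq_zero, symmPDerivContract]
  exact eq_comm

end CommRing

theorem exists_symmPDerivContract_eq {K : Type*} [Field K] [CharZero K] {n : ℕ} (hn : n ≠ 0)
    {H : σ → MvPolynomial σ K} (hH : ∀ j, (H j).IsHomogeneous (n + 1)) :
    ∃ g : σ → MvPolynomial σ K, (∀ i, (g i).IsHomogeneous (n + 1)) ∧ symmPDerivContract g = H := by
  set Q := ∑ i, X i * H i
  set c : K := (2 * n + 2)⁻¹
  have hQ : Q.IsHomogeneous (n + 2) := isHomogeneous_sum_X_mul hH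
  set g : σ → MvPolynomial σ K := fun j => (n : K)⁻¹ • (H j - c • pderiv j Q)
  have hg : ∀ i, (g i).IsHomogeneous (n + 1) := fun i =>
    (homogeneousSubmodule σ K (n + 1)).smul_mem _ <| (hH i).sub <|
      (homogeneousSubmodule σ K (n + 1)).smul_mem _ (by simpa using hQ.pderiv (i := i))
  have hradial : ∑ i, X i * g i = c • Q := by
    calc ∑ i, X i * g i = (n : K)⁻¹ • (Q - c • ∑ i, X i * pderiv i Q) := by
          simp only [g, mul_smul_comm, mul_sub, Finset.smul_sum, Finset.sum_sub_distrib,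
            smul_sub, Q]
      _ = ((n : K)⁻¹ * (1 - c * (n + 2))) • Q := by
          rw [hQ.sum_X_mul_pderiv, ← Nat.cast_smul_eq_nsmul K]
          push_cast
          module
      _ = c • Q := by
          congr 1
          simp only [c]
          field_simp
          ring
  refine ⟨g, hg, _root_.funext fun j => ?_⟩
  rw [symmPDerivContract_eq_pderiv_add_nsmul hg, hradial, (pderiv j).map_smul,
    ← Nat.cast_smul_eq_nsmul K]
  simp only [g, smul_smul, mul_inv_cancel₀ (Nat.cast_ne_zero.mpr hn : (n : K) ≠ 0), one_smul]
  abel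

end MvPolynomial

/-- Let `Lₙ = ker δₙ ⊂ Sⁿ(ℝ^{m*}) ⊗ S²(ℝ^{m*})`, with
`δₙ(f ⊗ q) = ∑_i f·z^i ⊗ ∂q/∂u^i`.  For every `hₙ` (a symmetric matrix `h i j` of
homogeneous degree-`n` polynomials, the coefficients of `u^i u^j`) there is a unique
`g ∈ S^{n+1}(ℝ^{m*}) ⊗ ℝ^m` (components `g i`) such that
`−2 ∑_{i,j} (∂g_i/∂z^j) ⊗ u^i u^j + hₙ ∈ Lₙ`.  The quadratic form
`−2∑ (∂g_i/∂z^j) u^i u^j` has symmetric matrix `M i j = −(∂g_i/∂z^j + ∂g_j/∂z^i)`, and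
membership of `M + hₙ` in `Lₙ = ker δₙ` reads
`∀ j, ∑_i ((M+h) i j + (M+h) j i)·z^i = 0`. -/
theorem unique_normalization_metric_jet (m n : ℕ) (hn : 2 ≤ n) :
    ∀ h : Fin m → Fin m → MvPolynomial (Fin m) ℝ,
      (∀ i j, (h i j).IsHomogeneous n) → (∀ i j, h i j = h j i) →
      ∃! g : {g : Fin m → MvPolynomial (Fin m) ℝ // ∀ i, (g i).IsHomogeneous (n + 1)},
        ∀ j, ∑ i,
            (((-(pderiv j (g.1 i) + pderiv i (g.1 j)) + h i j)
              + (-(pderiv i (g.1 j) + pderiv j (g.1 i)) + h j i)) * X i) = 0 := by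
  intro h hhom hsymm
  have hn0 : n ≠ 0 := by omega
  obtain ⟨g, hg, hgh⟩ := exists_symmPDerivContract_eq hn0
    fun j => isHomogeneous_sum_X_mul fun i => hhom i j
  refine ⟨⟨g, hg⟩,
    fun j => (sum_mul_X_eq_zero_iff_symmPDerivContract_eq hsymm j).2 (congrFun hgh j), ?_⟩
  rintro ⟨g', hg'⟩ hg'h
  refine Subtype.ext (symmPDerivContract_injOn hn0 hg' hg ?_)
  rw [hgh]
  exact _root_.funext fun j => (sum_mul_X_eq_zero_iff_symmPDerivContract_eq hsymm j).1 (hg'h j)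
end

section
/- Under the action of a 2-jet (E+g₂) ∈ N(m)_{k+1} on a jet of metric h = h₀ + h₁ + ⋯ ∈ (ℰ_k ⊗ S²ℝ^{m*})^{reg}, the degree-1 component transforms as ((E+g₂)·h)₁ = h₁ − 2 ∑_{i,j} (∂²g₂/∂e_i∂z^j) ⊗ (∂h₀/∂u^i) u^j evaluated with h₀ the constant term; in particular when h₀ = ∑_i (u^i)², this reads ((E+g₂)·h)₁ = h₁ − 2∑_{i,j}(∂g_{2,i}/∂z^j) ⊗ u^i u^j. -/
open MvPolynomial

/-- Truncation of a polynomial to total degree ≤ `d`. -/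
noncomputable def trunc (m d : ℕ) (p : MvPolynomial (Fin m) ℝ) : MvPolynomial (Fin m) ℝ :=
  ∑ i ∈ Finset.range (d + 1), homogeneousComponent i p

/-!
Only the 1-jet of the transition rule `h = Jᵀ · (H ∘ φ) · J` matters. Since `φ = id + g₂` with
`g₂` quadratic, composing with `φ` leaves the components of degree `0` and `1` unchanged; since
`J = 1 + ∂g₂` with `∂g₂` linear, the degree-`0` part gives `H₀ = h₀` and the degree-`1` part gives
`h₁ = H₁ + H₀ ∂g₂ + (∂g₂)ᵀ H₀`, which is the claimed formula once `H₀` is replaced by `h₀`.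
-/

open Finset

namespace MvPolynomial

variable {σ R : Type*} [CommSemiring R]

theorem homogeneousComponent_mul (p q : MvPolynomial σ R) (n : ℕ) :
    homogeneousComponent n (p * q) =
      ∑ ij ∈ antidiagonal n, homogeneousComponent ij.1 p * homogeneousComponent ij.2 q := by
  let _ := gradedAlgebra (σ := σ) (R := R)
  simp only [← decomposition.decompose'_apply]
  rw [← DirectSum.coe_mul_apply_eq_sum_antidiagonal]
  exact congrArg (fun x => (x n : MvPolynomial σ R))
    (DirectSum.decompose_mul (homogeneousSubmodule σ R) p q)

theorem homogeneousComponent_zero_mul (p q : MvPolynomial σ R) :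
    homogeneousComponent 0 (p * q) = homogeneousComponent 0 p * homogeneousComponent 0 q := by
  simp [homogeneousComponent_mul]

theorem homogeneousComponent_one_mul (p q : MvPolynomial σ R) :
    homogeneousComponent 1 (p * q) =
      homogeneousComponent 0 p * homogeneousComponent 1 q +
        homogeneousComponent 1 p * homogeneousComponent 0 q := by
  simp [homogeneousComponent_mul, Nat.antidiagonal_succ]

section CoordinateChange

variable {g : σ → MvPolynomial σ R} (hg₀ : ∀ l, homogeneousComponent 0 (g l) = 0)
include hg₀

theorem homogeneousComponent_zero_aeval_X_add (p : MvPolynomial σ R) :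
    homogeneousComponent 0 (aeval (fun l => X l + g l) p) = homogeneousComponent 0 p := by
  induction p using MvPolynomial.induction_on with
  | C a => rw [aeval_C, algebraMap_eq]
  | add p q hp hq => simp only [map_add, hp, hq]
  | mul_X p l hp =>
    rw [map_mul, aeval_X, homogeneousComponent_zero_mul, homogeneousComponent_zero_mul, hp,
      map_add, hg₀, add_zero]

theorem homogeneousComponent_one_aeval_X_add (hg₁ : ∀ l, homogeneousComponent 1 (g l) = 0)
    (p : MvPolynomial σ R) :
    homogeneousComponent 1 (aeval (fun l => X l + g l) p) = homogeneousComponent 1 p := by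
  induction p using MvPolynomial.induction_on with
  | C a => rw [aeval_C, algebraMap_eq]
  | add p q hp hq => simp only [map_add, hp, hq]
  | mul_X p l hp =>
    rw [map_mul, aeval_X, homogeneousComponent_one_mul, homogeneousComponent_one_mul,
      homogeneousComponent_zero_aeval_X_add hg₀, hp, map_add, map_add, hg₀, hg₁, add_zero,
      add_zero]

end CoordinateChange

section Pullback

variable {ι : Type*} [DecidableEq ι] {D : ι → ι → MvPolynomial σ R}
  (hD : ∀ a i, (D a i).IsHomogeneous 1)
include hD

theorem homogeneousComponent_zero_one_add (a i : ι) :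
    homogeneousComponent 0 ((if a = i then 1 else 0) + D a i) = if a = i then 1 else 0 := by
  rw [map_add, homogeneousComponent_of_mem (hD a i), if_neg zero_ne_one, add_zero]
  split_ifs <;> simp

theorem homogeneousComponent_one_one_add (a i : ι) :
    homogeneousComponent 1 ((if a = i then 1 else 0) + D a i) = D a i := by
  rw [map_add, homogeneousComponent_of_mem (hD a i), if_pos rfl]
  split_ifs <;> simp [homogeneousComponent_of_mem (isHomogeneous_one σ R)]

variable [Fintype ι] (F : ι → ι → MvPolynomial σ R) (i j : ι)

theorem homogeneousComponent_zero_pullback :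
    homogeneousComponent 0 (∑ a, ∑ b,
      ((if a = i then 1 else 0) + D a i) * ((if b = j then 1 else 0) + D b j) * F a b) =
      homogeneousComponent 0 (F i j) := by
  simp only [map_sum, homogeneousComponent_zero_mul, homogeneousComponent_zero_one_add hD,
    ite_mul, one_mul, zero_mul, sum_ite_eq', mem_univ, if_true, sum_ite_irrel, sum_const_zero]

theorem homogeneousComponent_one_pullback :
    homogeneousComponent 1 (∑ a, ∑ b,
      ((if a = i then 1 else 0) + D a i) * ((if b = j then 1 else 0) + D b j) * F a b) =
      homogeneousComponent 1 (F i j) +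
        ∑ a, (homogeneousComponent 0 (F a j) * D a i + homogeneousComponent 0 (F i a) * D a j) := by
  simp only [map_sum, homogeneousComponent_zero_mul, homogeneousComponent_one_mul,
    homogeneousComponent_zero_one_add hD, homogeneousComponent_one_one_add hD]
  simp only [ite_mul, mul_ite, one_mul, zero_mul, mul_one, mul_zero, add_mul, sum_add_distrib,
    sum_ite_eq', mem_univ, if_true, sum_ite_irrel, sum_const_zero]
  simp only [mul_comm (D _ _)]
  ring

end Pullback

end MvPolynomial

theorem homogeneousComponent_trunc {m d k : ℕ} (hk : k ≤ d) (p : MvPolynomial (Fin m) ℝ) :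
    homogeneousComponent k (trunc m d p) = homogeneousComponent k p := by
  rw [trunc, map_sum, sum_eq_single_of_mem k (mem_range.2 (Nat.lt_succ_of_le hk)),
    homogeneousComponent_of_mem (homogeneousComponent_mem k p), if_pos rfl]
  intro n _ hn
  rw [homogeneousComponent_of_mem (homogeneousComponent_mem n p), if_neg hn.symm]

/-- let `g₂ ∈ S²ℝ^{m*} ⊗ ℝ^m` (components `g₂ a` homogeneous of degree 2),
let `h = h₀ + h₁ + ⋯` be a jet of metric (a symmetric-matrix-valued polynomial map, with
`h i j` the coefficient of `u^i u^j`), and let `H = (E+g₂)·h` be the transformed jet,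
characterized (to first order) by the transition rule `h_X(x) = J(x)ᵀ · H(φ(x)) · J(x)`
for the coordinate change `φ = E+g₂ : x ↦ x + g₂(x)` with Jacobian
`J a i = δ_{ai} + ∂g₂ₐ/∂z^i`.  Then the degree-1 component transforms as
`H₁ = h₁ − 2∑_{i,j} (∂²g₂/∂e_i∂z^j) ⊗ (∂h₀/∂u^i) u^j`, i.e.
`(H)₁ i j = (h)₁ i j − ∑_a ((h₀)_{aj} ∂g₂ₐ/∂z^i + (h₀)_{ia} ∂g₂ₐ/∂z^j)`;
in particular, when `h₀ = ∑ (u^i)²`,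
`(H)₁ i j = (h)₁ i j − (∂g₂ᵢ/∂z^j + ∂g₂ⱼ/∂z^i)`
(the matrix form of `h₁ − 2∑ (∂g_{2,i}/∂z^j) ⊗ u^i u^j`). -/
theorem metric_jet_degree_one_transform (m : ℕ)
    (g₂ : Fin m → MvPolynomial (Fin m) ℝ) (hg₂ : ∀ a, (g₂ a).IsHomogeneous 2)
    (h H : Fin m → Fin m → MvPolynomial (Fin m) ℝ)
    (hrel : ∀ i j, trunc m 1 (h i j) =
      trunc m 1 (∑ a, ∑ b,
        ((if a = i then (1 : MvPolynomial (Fin m) ℝ) else 0) + pderiv i (g₂ a)) *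
        ((if b = j then (1 : MvPolynomial (Fin m) ℝ) else 0) + pderiv j (g₂ b)) *
        aeval (fun l => (X l : MvPolynomial (Fin m) ℝ) + g₂ l) (H a b))) :
    (∀ i j, homogeneousComponent 1 (H i j) = homogeneousComponent 1 (h i j)
        - ∑ a, (homogeneousComponent 0 (h a j) * pderiv i (g₂ a)
              + homogeneousComponent 0 (h i a) * pderiv j (g₂ a))) ∧
    ((∀ i j, homogeneousComponent 0 (h i j)
        = if i = j then (1 : MvPolynomial (Fin m) ℝ) else 0) →
      ∀ i j, homogeneousComponent 1 (H i j) = homogeneousComponent 1 (h i j)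
          - (pderiv j (g₂ i) + pderiv i (g₂ j))) := by
  have hJ : ∀ a i, (pderiv i (g₂ a)).IsHomogeneous 1 := fun a i => (hg₂ a).pderiv
  have hg₀ : ∀ l, homogeneousComponent 0 (g₂ l) = 0 := fun l => by
    rw [homogeneousComponent_of_mem (hg₂ l), if_neg (by norm_num)]
  have hg₁ : ∀ l, homogeneousComponent 1 (g₂ l) = 0 := fun l => by
    rw [homogeneousComponent_of_mem (hg₂ l), if_neg (by norm_num)]
  have h₀ : ∀ i j, homogeneousComponent 0 (H i j) = homogeneousComponent 0 (h i j) :=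
    fun i j => by
      simpa only [homogeneousComponent_trunc zero_le_one, homogeneousComponent_zero_pullback hJ,
        homogeneousComponent_zero_aeval_X_add hg₀]
        using (congrArg (homogeneousComponent 0) (hrel i j)).symm
  have h₁ : ∀ i j, homogeneousComponent 1 (h i j) = homogeneousComponent 1 (H i j) +
      ∑ a, (homogeneousComponent 0 (h a j) * pderiv i (g₂ a)
        + homogeneousComponent 0 (h i a) * pderiv j (g₂ a)) := fun i j => by
    simpa only [homogeneousComponent_trunc le_rfl, homogeneousComponent_one_pullback hJ,
      homogeneousComponent_one_aeval_X_add hg₀ hg₁, homogeneousComponent_zero_aeval_X_add hg₀, h₀]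
      using congrArg (homogeneousComponent 1) (hrel i j)
  have general := fun i j => eq_sub_of_add_eq (h₁ i j).symm
  refine ⟨general, fun hEuclid i j => ?_⟩
  simp only [general, hEuclid, ite_mul, one_mul, zero_mul, sum_add_distrib, sum_ite_eq,
    sum_ite_eq', mem_univ, if_true]
  rw [add_comm (pderiv i (g₂ j))]
end

section
/- Every GL(m,ℝ)-equivariant polynomial map from (S²ℝ^{m*})^{reg} (nondegenerate quadratic forms) to ℝ is a polynomial in det(h) and det(h)^{-1}; equivalently, the algebra of GL(m,ℝ)-invariant regular functions on the variety of nondegenerate symmetric m×m matrices under congruence h ↦ gᵀhg (or the appropriate twisted action h ↦ (g^{-1})ᵀ h g^{-1}) is generated by det(h) and det(h)^{-1}. -/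
open Matrix

/-- Every `GL(m,ℝ)`-invariant regular function on the variety
`(S²ℝ^{m*})^{reg}` of nondegenerate quadratic forms (identified with symmetric `m×m`
matrices `h` with `det h ≠ 0`, with the congruence action `h ↦ gᵀ h g`) is a polynomial
in `det h` and `(det h)⁻¹`, i.e. a Laurent polynomial in `det h`.  "Regular" means
`P = Q / (det h)^N` for a polynomial `Q` in the matrix entries. -/
theorem invariant_regular_functions_generated_by_det (m : ℕ)
    (P : Matrix (Fin m) (Fin m) ℝ → ℝ)
    (hreg : ∃ (Q : MvPolynomial (Fin m × Fin m) ℝ) (N : ℕ),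
      ∀ h : Matrix (Fin m) (Fin m) ℝ, hᵀ = h → IsUnit h.det →
        P h * h.det ^ N = MvPolynomial.eval (fun p => h p.1 p.2) Q)
    (hinv : ∀ g : GL (Fin m) ℝ, ∀ h : Matrix (Fin m) (Fin m) ℝ, hᵀ = h → IsUnit h.det →
      P ((↑g)ᵀ * h * (↑g : Matrix (Fin m) (Fin m) ℝ)) = P h) :
    ∃ (s : Finset ℤ) (c : ℤ → ℝ),
      ∀ h : Matrix (Fin m) (Fin m) ℝ, hᵀ = h → IsUnit h.det →
        P h = ∑ k ∈ s, c k * h.det ^ k := by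
  classical
  obtain ⟨Q, N, hQ⟩ := hreg
  -- invariance for invertible matrices
  have inv' : ∀ g : Matrix (Fin m) (Fin m) ℝ, IsUnit g →
      ∀ h : Matrix (Fin m) (Fin m) ℝ, hᵀ = h → IsUnit h.det →
      P (gᵀ * h * g) = P h := by
    intro g hg h hsym hdet
    exact hinv hg.unit h hsym hdet
  -- scaling: reduce a nondegenerate diagonal matrix to its sign pattern
  have scale : ∀ d : Fin m → ℝ, (∀ j, d j ≠ 0) →
      P (diagonal d) = P (diagonal fun j => Real.sign (d j)) := by
    intro d hd
    have hgd : ∀ j, Real.sqrt |d j| ≠ 0 := by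
      intro j
      have : (0:ℝ) < |d j| := abs_pos.mpr (hd j)
      positivity
    have hgu : IsUnit (diagonal fun j => Real.sqrt |d j| : Matrix (Fin m) (Fin m) ℝ) := by
      rw [Matrix.isUnit_iff_isUnit_det, Matrix.det_diagonal, isUnit_iff_ne_zero]
      exact Finset.prod_ne_zero_iff.mpr fun j _ => hgd j
    have hsu : IsUnit (diagonal fun j => Real.sign (d j) : Matrix (Fin m) (Fin m) ℝ).det := by
      rw [Matrix.det_diagonal, isUnit_iff_ne_zero]
      refine Finset.prod_ne_zero_iff.mpr fun j _ => ?_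
      simp [Real.sign_eq_zero_iff, hd j]
    have key := inv' (diagonal fun j => Real.sqrt |d j|) hgu
      (diagonal fun j => Real.sign (d j)) (Matrix.diagonal_transpose _) hsu
    rw [Matrix.diagonal_transpose, Matrix.diagonal_mul_diagonal,
      Matrix.diagonal_mul_diagonal] at key
    have : (fun j => Real.sqrt |d j| * Real.sign (d j) * Real.sqrt |d j|) = d := by
      funext j
      have h1 : Real.sqrt |d j| * Real.sqrt |d j| = |d j| :=
        Real.mul_self_sqrt (abs_nonneg _)
      have h2 : Real.sqrt |d j| * Real.sign (d j) * Real.sqrt |d j|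
          = Real.sign (d j) * (Real.sqrt |d j| * Real.sqrt |d j|) := by ring
      rw [h2, h1]
      rcases lt_trichotomy (d j) 0 with hlt | heq | hgt
      · rw [Real.sign_of_neg hlt, abs_of_neg hlt]; ring
      · exact absurd heq (hd j)
      · rw [Real.sign_of_pos hgt, abs_of_pos hgt]; ring
    rwa [this] at key
  -- flip: changing one sign does not change the value
  have flip : ∀ (ε : Fin m → ℝ), (∀ j, ε j = 1 ∨ ε j = -1) → ∀ i : Fin m,
      P (diagonal (Function.update ε i (-1))) = P (diagonal (Function.update ε i 1)) := by
    intro ε hε i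
    have hεne : ∀ j, ε j ≠ 0 := by
      intro j; rcases hε j with h | h <;> simp [h]
    set e : ℝ := ∏ j ∈ Finset.univ.erase i, ε j with he
    have heNe : e ≠ 0 := Finset.prod_ne_zero_iff.mpr fun j _ => hεne j
    -- determinant of the deformed diagonal matrix
    have hdet : ∀ t : ℝ, (diagonal (Function.update ε i t)).det = t * e := by
      intro t
      rw [Matrix.det_diagonal, he,
        Finset.prod_update_of_mem (Finset.mem_univ i), Finset.erase_eq]
    -- value of P along the deformation
    have val : ∀ t : ℝ, t ≠ 0 →
        P (diagonal (Function.update ε i t)) =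
          P (diagonal (Function.update ε i (Real.sign t))) := by
      intro t ht
      have hd : ∀ j, Function.update ε i t j ≠ 0 := by
        intro j
        by_cases hj : j = i
        · subst hj; simpa using ht
        · rw [Function.update_of_ne hj]; exact hεne j
      have := scale (Function.update ε i t) hd
      have hfun : (fun j => Real.sign (Function.update ε i t j)) =
          Function.update ε i (Real.sign t) := by
        funext j
        by_cases hj : j = i
        · subst hj; simp
        · rw [Function.update_of_ne hj, Function.update_of_ne hj]
          rcases hε j with h | h
          · rw [h, Real.sign_one]
          · rw [h]
            have : Real.sign (-(1:ℝ)) = -Real.sign 1 := Real.sign_neg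
            rw [this, Real.sign_one]
      rwa [hfun] at this
    -- one-variable polynomial computing Q along the deformation
    set φ : Fin m × Fin m → Polynomial ℝ := fun pr =>
      if pr.1 = pr.2 then (if pr.1 = i then Polynomial.X else Polynomial.C (ε pr.1)) else 0
      with hφ
    set p : Polynomial ℝ := MvPolynomial.eval₂ Polynomial.C φ Q with hp
    have hpeval : ∀ t : ℝ, Polynomial.eval t p =
        MvPolynomial.eval (fun pr => diagonal (Function.update ε i t) pr.1 pr.2) Q := by
      intro t
      have hcomp := MvPolynomial.eval₂_comp_left (Polynomial.evalRingHom t)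
        (Polynomial.C : ℝ →+* Polynomial ℝ) φ Q
      have h1 : (Polynomial.evalRingHom t).comp (Polynomial.C : ℝ →+* Polynomial ℝ)
          = RingHom.id ℝ := by
        ext x; simp
      have h2 : (Polynomial.evalRingHom t) ∘ φ =
          fun pr => diagonal (Function.update ε i t) pr.1 pr.2 := by
        funext pr
        simp only [Function.comp_apply, hφ]
        by_cases hpr : pr.1 = pr.2
        · by_cases hpi : pr.1 = i
          · rw [if_pos hpr, if_pos hpi, Matrix.diagonal_apply, if_pos hpr, hpi,
              Function.update_self]
            simp
          · rw [if_pos hpr, if_neg hpi, Matrix.diagonal_apply, if_pos hpr,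
              Function.update_of_ne hpi]
            simp
        · rw [if_neg hpr, Matrix.diagonal_apply, if_neg hpr]
          simp
      rw [hp, ← MvPolynomial.eval₂_id]
      rw [show ((Polynomial.evalRingHom t) (MvPolynomial.eval₂ Polynomial.C φ Q)
        = Polynomial.eval t (MvPolynomial.eval₂ Polynomial.C φ Q)) from rfl] at hcomp
      rw [hcomp, h1, h2]
    -- evaluate via hQ
    have hval : ∀ t : ℝ, t ≠ 0 →
        P (diagonal (Function.update ε i t)) * (t * e) ^ N = Polynomial.eval t p := by
      intro t ht
      have hsym : (diagonal (Function.update ε i t))ᵀ = diagonal (Function.update ε i t) :=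
        Matrix.diagonal_transpose _
      have hdu : IsUnit (diagonal (Function.update ε i t)).det := by
        rw [hdet t, isUnit_iff_ne_zero]
        exact mul_ne_zero ht heNe
      have := hQ (diagonal (Function.update ε i t)) hsym hdu
      rw [hdet t] at this
      rw [this, hpeval t]
    set a : ℝ := P (diagonal (Function.update ε i 1)) with ha
    set b : ℝ := P (diagonal (Function.update ε i (-1))) with hb
    have hpa : p = Polynomial.C (a * e ^ N) * Polynomial.X ^ N := by
      have hzero : (p - Polynomial.C (a * e ^ N) * Polynomial.X ^ N) = 0 := by
        apply Polynomial.eq_zero_of_infinite_isRoot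
        apply Set.Infinite.mono (s := Set.Ioi (0:ℝ)) ?_ (Set.Ioi_infinite 0)
        intro t ht
        have htpos : (0:ℝ) < t := ht
        have htne : t ≠ 0 := ne_of_gt htpos
        have h1 := hval t htne
        have h2 := val t htne
        rw [Real.sign_of_pos htpos] at h2
        simp only [Set.mem_setOf_eq, Polynomial.IsRoot, Polynomial.eval_sub,
          Polynomial.eval_mul, Polynomial.eval_C, Polynomial.eval_pow, Polynomial.eval_X]
        rw [← h1, h2, ← ha, mul_pow]
        ring
      have := sub_eq_zero.mp hzero
      exact this
    have hpb : p = Polynomial.C (b * e ^ N) * Polynomial.X ^ N := by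
      have hzero : (p - Polynomial.C (b * e ^ N) * Polynomial.X ^ N) = 0 := by
        apply Polynomial.eq_zero_of_infinite_isRoot
        apply Set.Infinite.mono (s := Set.Iio (0:ℝ)) ?_ (Set.Iio_infinite 0)
        intro t ht
        have htneg : t < 0 := ht
        have htne : t ≠ 0 := ne_of_lt htneg
        have h1 := hval t htne
        have h2 := val t htne
        rw [Real.sign_of_neg htneg] at h2
        simp only [Set.mem_setOf_eq, Polynomial.IsRoot, Polynomial.eval_sub,
          Polynomial.eval_mul, Polynomial.eval_C, Polynomial.eval_pow, Polynomial.eval_X]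
        rw [← h1, h2, ← hb, mul_pow]
        ring
      have := sub_eq_zero.mp hzero
      exact this
    have hab : a * e ^ N = b * e ^ N := by
      have hc : (Polynomial.C (a * e ^ N) * Polynomial.X ^ N).coeff N
          = (Polynomial.C (b * e ^ N) * Polynomial.X ^ N).coeff N := by
        rw [← hpa, ← hpb]
      rw [Polynomial.coeff_C_mul, Polynomial.coeff_C_mul, Polynomial.coeff_X_pow,
        if_pos rfl, mul_one, mul_one] at hc
      exact hc
    have : a = b := mul_right_cancel₀ (pow_ne_zero N heNe) hab
    rw [hb, ha] at this
    exact this.symm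
  -- induction on the number of -1's: any sign pattern gives the same value as identity
  have signs : ∀ n : ℕ, ∀ ε : Fin m → ℝ, (∀ j, ε j = 1 ∨ ε j = -1) →
      (Finset.univ.filter fun j => ε j = -1).card = n → P (diagonal ε) = P 1 := by
    intro n
    induction n with
    | zero =>
      intro ε hε hcard
      have : ε = fun _ => 1 := by
        funext j
        rcases hε j with h | h
        · exact h
        · exfalso
          have : j ∈ Finset.univ.filter fun j => ε j = -1 := by
            simp [h]
          rw [Finset.card_eq_zero.mp hcard] at this
          exact absurd this (Finset.notMem_empty j)
      rw [this, Matrix.diagonal_one]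
    | succ n ih =>
      intro ε hε hcard
      have hne : (Finset.univ.filter fun j => ε j = -1).Nonempty := by
        rw [← Finset.card_pos, hcard]; omega
      obtain ⟨i, hi⟩ := hne
      have hi' : ε i = -1 := (Finset.mem_filter.mp hi).2
      set ε' : Fin m → ℝ := Function.update ε i 1 with hε'
      have hε'vals : ∀ j, ε' j = 1 ∨ ε' j = -1 := by
        intro j
        by_cases hj : j = i
        · subst hj; left; simp [hε']
        · rw [hε', Function.update_of_ne hj]; exact hε j
      have hεeq : ε = Function.update ε' i (-1) := by
        funext j
        by_cases hj : j = i
        · subst hj; simp [hε', hi']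
        · rw [Function.update_of_ne hj, hε', Function.update_of_ne hj]
      have step : P (diagonal ε) = P (diagonal ε') := by
        rw [hεeq, flip ε' hε'vals i]
        have hupd : Function.update ε' i 1 = ε' := by
          funext j
          by_cases hj : j = i
          · subst hj; simp [hε']
          · rw [Function.update_of_ne hj]
        rw [hupd]
      rw [step]
      apply ih ε' hε'vals
      have : (Finset.univ.filter fun j => ε' j = -1)
          = (Finset.univ.filter fun j => ε j = -1).erase i := by
        ext j
        simp only [Finset.mem_filter, Finset.mem_univ, true_and, Finset.mem_erase]
        constructor
        · intro hj
          by_cases hji : j = i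
          · exfalso; subst hji; rw [hε'] at hj; simp at hj; linarith
          · exact ⟨hji, by rwa [hε', Function.update_of_ne hji] at hj⟩
        · intro ⟨hji, hj⟩
          rwa [hε', Function.update_of_ne hji]
      rw [this, Finset.card_erase_of_mem hi, hcard]
      omega
  -- main conclusion: P is constant
  have const : ∀ h : Matrix (Fin m) (Fin m) ℝ, hᵀ = h → IsUnit h.det → P h = P 1 := by
    intro h hsym hdu
    have hH : h.IsHermitian := by
      rwa [Matrix.IsHermitian, Matrix.conjTranspose_eq_transpose_of_trivial]
    have hspec := hH.spectral_theorem
    set U : Matrix (Fin m) (Fin m) ℝ := (hH.eigenvectorUnitary : Matrix (Fin m) (Fin m) ℝ)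
      with hU
    have hstar : star U = Uᵀ := by
      rw [Matrix.star_eq_conjTranspose, Matrix.conjTranspose_eq_transpose_of_trivial]
    have hofReal : (RCLike.ofReal ∘ hH.eigenvalues : Fin m → ℝ) = hH.eigenvalues := by
      funext j; simp
    have hspec' : h = (Uᵀ)ᵀ * diagonal hH.eigenvalues * Uᵀ := by
      rw [Matrix.transpose_transpose, ← hstar, ← hofReal]
      exact hspec
    have hUunit : IsUnit (Uᵀ : Matrix (Fin m) (Fin m) ℝ) := by
      rw [Matrix.isUnit_iff_isUnit_det, Matrix.det_transpose]
      have := Matrix.UnitaryGroup.det_isUnit ⟨U, hH.eigenvectorUnitary.2⟩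
      exact this
    have hDdet : IsUnit (diagonal hH.eigenvalues : Matrix (Fin m) (Fin m) ℝ).det := by
      have : h.det = (diagonal hH.eigenvalues : Matrix (Fin m) (Fin m) ℝ).det := by
        conv_lhs => rw [hspec']
        rw [Matrix.det_mul, Matrix.det_mul, Matrix.transpose_transpose,
          Matrix.det_transpose]
        have hmem := hH.eigenvectorUnitary.2
        rw [Matrix.mem_unitaryGroup_iff] at hmem
        have : U.det * U.det = 1 := by
          have := congrArg Matrix.det hmem
          rwa [Matrix.det_mul, Matrix.star_eq_conjTranspose,
            Matrix.conjTranspose_eq_transpose_of_trivial, Matrix.det_transpose,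
            Matrix.det_one] at this
        linear_combination (diagonal hH.eigenvalues).det * this
      rwa [this] at hdu
    have h1 : P h = P (diagonal hH.eigenvalues) := by
      conv_lhs => rw [hspec']
      exact inv' (Uᵀ) hUunit (diagonal hH.eigenvalues) (Matrix.diagonal_transpose _) hDdet
    have hev : ∀ j, hH.eigenvalues j ≠ 0 := by
      intro j hj
      rw [Matrix.det_diagonal, isUnit_iff_ne_zero] at hDdet
      exact hDdet (Finset.prod_eq_zero (Finset.mem_univ j) hj)
    have h2 := scale hH.eigenvalues hev
    have hsign : ∀ j, Real.sign (hH.eigenvalues j) = 1 ∨ Real.sign (hH.eigenvalues j) = -1 := by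
      intro j
      rcases Real.sign_apply_eq_of_ne_zero _ (hev j) with hs | hs
      · right; exact hs
      · left; exact hs
    have h3 := signs (Finset.univ.filter fun j =>
        Real.sign (hH.eigenvalues j) = -1).card _ hsign rfl
    rw [h1, h2, h3]
  refine ⟨{0}, fun _ => P 1, ?_⟩
  intro h hsym hdu
  rw [const h hsym hdu]
  simp
end
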